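/- arXiv:quant-ph/0111071 — 4 statements merged into one kernel-verified Lean document; each statement's English description precedes it below -/
import Mathlib

section
/- With μ the uniform measure on S², ε = 0 and d ∈ (-1, 1), the experiment e⁰_{u,d} is classical: μ(eig({o₁ᵘ})) = P(o₁ᵘ, μ) = μ(pos({o₁ᵘ})) = (1-d)/2, and similarly all three quantities equal (1+d)/2 for outcome o₂ᵘ. -/
open MeasureTheory Metric
open scoped RealInnerProductSpace

/-- the uniform (normalized surface area) probability measure on the unit sphere in ℝ³ -/
noncomputable def sphereUniform :
    Measure (sphere (0 : EuclideanSpace ℝ (Fin 3)) 1) :=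
  ((volume : Measure (EuclideanSpace ℝ (Fin 3))).toSphere Set.univ)⁻¹ •
    (volume : Measure (EuclideanSpace ℝ (Fin 3))).toSphere

/-!
Archimedes' hat-box theorem. By `Measure.toSphere`, the normalized measure of the cap
`{v | d < ⟪v, u⟫}` is the volume of the cone `{x | ‖x‖ < 1 ∧ d ‖x‖ < ⟪x, u⟫}` divided by the
volume `4π/3` of the unit ball. For `0 < d < 1`, in orthonormal coordinates with first axis `u`,
this cone is the solid of revolution whose cross-section at height `t ∈ (0, 1]` is the disc of
squared radius `min (1 - t²) ((1 - d²) / d² * t²)`, so its volume is `2π(1 - d)/3`. Closed caps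
and the cap at `d = 0` follow by continuity of the measure in `d`, negative `d` by passing to the
complementary cap of `-u`, and the probabilities are integrals of indicators of caps.
-/

open Real Set Filter Module
open scoped ENNReal Topology Pointwise

section

variable {α : Type*} [MeasurableSpace α] {μ : Measure α} {f : α → ℝ} {G : ℝ → ℝ≥0∞} {a b t : ℝ}

theorem measure_setOf_le_eq_of_measure_setOf_lt [IsFiniteMeasure μ] (hf : Measurable f)
    (hat : a < t) (hG : ContinuousWithinAt G (Iio t) t)
    (h : ∀ s ∈ Ioo a t, μ {x | s < f x} = G s) : μ {x | t ≤ f x} = G t := by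
  obtain ⟨s, hs_mono, hs_mem, hs_lim⟩ := exists_seq_strictMono_tendsto' hat
  have hInter : ⋂ n, {x | s n < f x} = {x | t ≤ f x} := by
    ext x
    simp only [mem_iInter, mem_ofPred_eq]
    exact ⟨fun hx ↦ le_of_tendsto' hs_lim fun n ↦ (hx n).le,
      fun hx n ↦ (hs_mem n).2.trans_le hx⟩
  have hlim := tendsto_measure_iInter_atTop (μ := μ) (s := fun n ↦ {x | s n < f x})
    (fun _ ↦ (measurableSet_lt measurable_const hf).nullMeasurableSet)
    (fun _ _ hmn _ hx ↦ (hs_mono.monotone hmn).trans_lt hx) ⟨0, measure_ne_top _ _⟩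
  rw [hInter] at hlim
  have hs_lim' : Tendsto s atTop (𝓝[<] t) :=
    tendsto_nhdsWithin_iff.2 ⟨hs_lim, .of_forall fun n ↦ (hs_mem n).2⟩
  exact tendsto_nhds_unique hlim <| (hG.tendsto.comp hs_lim').congr fun n ↦ (h _ (hs_mem n)).symm

theorem measure_setOf_lt_eq_of_measure_setOf_lt (hab : a < b)
    (hG : ContinuousWithinAt G (Ioi a) a) (h : ∀ s ∈ Ioo a b, μ {x | s < f x} = G s) :
    μ {x | a < f x} = G a := by
  obtain ⟨s, hs_anti, hs_mem, hs_lim⟩ := exists_seq_strictAnti_tendsto' hab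
  have hUnion : ⋃ n, {x | s n < f x} = {x | a < f x} := by
    ext x
    simp only [mem_iUnion, mem_ofPred_eq]
    exact ⟨fun ⟨n, hn⟩ ↦ (hs_mem n).1.trans hn,
      fun hx ↦ (hs_lim.eventually (gt_mem_nhds hx)).exists⟩
  have hlim := tendsto_measure_iUnion_atTop (μ := μ) (s := fun n ↦ {x | s n < f x})
    (fun _ _ hmn _ hx ↦ (hs_anti.antitone hmn).trans_lt hx)
  rw [hUnion] at hlim
  have hs_lim' : Tendsto s atTop (𝓝[>] a) :=
    tendsto_nhdsWithin_iff.2 ⟨hs_lim, .of_forall fun n ↦ (hs_mem n).1⟩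
  exact tendsto_nhds_unique hlim <| (hG.tendsto.comp hs_lim').congr fun n ↦ (h _ (hs_mem n)).symm

theorem integral_ite_one {p : α → Prop} [DecidablePred p] (hp : MeasurableSet {x | p x}) :
    ∫ x, (if p x then (1 : ℝ) else 0) ∂μ = μ.real {x | p x} := by
  simpa [indicator] using integral_indicator_one (μ := μ) hp

end

theorem volume_sum_sq_lt_fin_two (R : ℝ) :
    volume {y : Fin 2 → ℝ | ∑ j, y j ^ 2 < R} = ENNReal.ofReal (π * R) := by
  rcases le_or_gt R 0 with hR | hR
  · have : {y : Fin 2 → ℝ | ∑ j, y j ^ 2 < R} = ∅ :=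
      eq_empty_of_forall_notMem fun y hy ↦ (hy.trans_le hR).not_ge (by positivity)
    rw [this, measure_empty, ENNReal.ofReal_of_nonpos (by nlinarith [pi_pos])]
  have : {y : Fin 2 → ℝ | ∑ j, y j ^ 2 < R} = WithLp.toLp 2 ⁻¹' ball 0 √R := by
    ext y
    rw [mem_preimage, mem_ball_zero_iff, EuclideanSpace.norm_eq,
      Real.sqrt_lt_sqrt_iff (by positivity)]
    simp
  rw [this, (PiLp.volume_preserving_toLp _).measure_preimage measurableSet_ball.nullMeasurableSet,
    EuclideanSpace.volume_ball_fin_two, ← ENNReal.ofReal_pow (sqrt_nonneg R),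
    ← ENNReal.ofReal_mul (by positivity), sq_sqrt hR.le, mul_comm]

theorem volume_solidOfRevolution {s : Set ℝ} (hs : MeasurableSet s) {ρ : ℝ → ℝ}
    (hρ : Measurable ρ) :
    volume {p : ℝ × (Fin 2 → ℝ) | p.1 ∈ s ∧ ∑ j, p.2 j ^ 2 < ρ p.1} =
      ∫⁻ t in s, ENNReal.ofReal (π * ρ t) := by
  have hm : MeasurableSet {p : ℝ × (Fin 2 → ℝ) | p.1 ∈ s ∧ ∑ j, p.2 j ^ 2 < ρ p.1} :=
    (measurable_fst hs).inter (measurableSet_lt (by fun_prop) (hρ.comp measurable_fst))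
  rw [Measure.volume_eq_prod, Measure.prod_apply hm, ← lintegral_indicator hs]
  refine lintegral_congr fun t ↦ ?_
  by_cases ht : t ∈ s
  · simp only [indicator_of_mem ht, preimage, mem_ofPred_eq, ht, true_and]
    exact volume_sum_sq_lt_fin_two _
  · simp [ht, preimage]

theorem cone_iff_mem_solidOfRevolution {d r t q : ℝ} (hd : 0 < d) (hr : 0 ≤ r) (hq : 0 ≤ q)
    (hrtq : r ^ 2 = t ^ 2 + q) :
    r < 1 ∧ d * r < t ↔ t ∈ Ioc 0 1 ∧ q < min (1 - t ^ 2) ((1 - d ^ 2) / d ^ 2 * t ^ 2) := by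
  rw [lt_min_iff, div_mul_eq_mul_div, lt_div_iff₀ (by positivity)]
  constructor
  · rintro ⟨hr1, hdr⟩
    have ht : 0 < t := (by positivity : 0 ≤ d * r).trans_lt hdr
    have hdr2 : (d * r) ^ 2 < t ^ 2 := pow_lt_pow_left₀ hdr (by positivity) two_ne_zero
    refine ⟨⟨ht, by nlinarith⟩, by nlinarith, by nlinarith⟩
  · rintro ⟨⟨ht, -⟩, hq1, hqd⟩
    refine ⟨by nlinarith, lt_of_pow_lt_pow_left₀ 2 ht.le ?_⟩
    nlinarith

theorem lintegral_cone_profile {d : ℝ} (hd0 : 0 < d) (hd1 : d < 1) :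
    ∫⁻ t in Ioc 0 1, ENNReal.ofReal (π * min (1 - t ^ 2) ((1 - d ^ 2) / d ^ 2 * t ^ 2)) =
      ENNReal.ofReal (2 * π / 3 * (1 - d)) := by
  have hcont : Continuous fun t : ℝ ↦ π * min (1 - t ^ 2) ((1 - d ^ 2) / d ^ 2 * t ^ 2) := by
    fun_prop
  rw [← ofReal_integral_eq_lintegral_ofReal (hcont.integrableOn_Ioc)]
  swap
  · filter_upwards [ae_restrict_mem measurableSet_Ioc] with t ⟨ht0, ht1⟩
    have : 0 ≤ (1 - d ^ 2) / d ^ 2 := div_nonneg (by nlinarith) (by positivity)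
    exact mul_nonneg pi_pos.le (le_min (by nlinarith) (by positivity))
  rw [← intervalIntegral.integral_of_le zero_le_one,
    ← intervalIntegral.integral_add_adjacent_intervals (b := d) (hcont.intervalIntegrable _ _)
      (hcont.intervalIntegrable _ _)]
  have h₁ : ∫ t in (0 : ℝ)..d, π * min (1 - t ^ 2) ((1 - d ^ 2) / d ^ 2 * t ^ 2) =
      ∫ t in (0 : ℝ)..d, π * ((1 - d ^ 2) / d ^ 2) * t ^ 2 := by
    refine intervalIntegral.integral_congr fun t ht ↦ ?_
    rw [uIcc_of_le hd0.le] at ht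
    have hmin : (1 - d ^ 2) / d ^ 2 * t ^ 2 ≤ 1 - t ^ 2 := by
      rw [div_mul_eq_mul_div, div_le_iff₀ (by positivity)]
      nlinarith [ht.1, ht.2]
    rw [min_eq_right hmin, mul_assoc]
  have h₂ : ∫ t in d..1, π * min (1 - t ^ 2) ((1 - d ^ 2) / d ^ 2 * t ^ 2) =
      ∫ t in d..1, π * (1 - t ^ 2) := by
    refine intervalIntegral.integral_congr fun t ht ↦ ?_
    rw [uIcc_of_le hd1.le] at ht
    have hmin : 1 - t ^ 2 ≤ (1 - d ^ 2) / d ^ 2 * t ^ 2 := by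
      rw [div_mul_eq_mul_div, le_div_iff₀ (by positivity)]
      nlinarith [ht.1, ht.2]
    rw [min_eq_left hmin]
  rw [h₁, h₂, intervalIntegral.integral_const_mul, intervalIntegral.integral_const_mul,
    intervalIntegral.integral_sub intervalIntegrable_const
      (intervalIntegral.intervalIntegrable_pow 2), integral_pow, integral_pow, integral_one]
  congr 1
  field_simp
  ring

theorem exists_measurePreserving_inner_fst {E : Type*} [NormedAddCommGroup E]
    [InnerProductSpace ℝ E] [MeasurableSpace E] [BorelSpace E] [FiniteDimensional ℝ E]
    {n : ℕ} (hE : finrank ℝ E = n + 1) {u : E} (hu : ‖u‖ = 1) :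
    ∃ Φ : E → ℝ × (Fin n → ℝ), MeasurePreserving Φ ∧
      ∀ x, (Φ x).1 = ⟪x, u⟫ ∧ ‖x‖ ^ 2 = (Φ x).1 ^ 2 + ∑ j, (Φ x).2 j ^ 2 := by
  have hu' : Orthonormal ℝ (({0} : Set (Fin (n + 1))).domRestrict fun _ ↦ u) :=
    ⟨fun _ ↦ hu, fun i j hij ↦ absurd (Subtype.ext (i.2.trans j.2.symm)) hij⟩
  obtain ⟨b, hb⟩ := hu'.exists_orthonormalBasis_extension_of_card_eq (by simp [hE])
  refine ⟨MeasurableEquiv.piFinSuccAbove (fun _ ↦ ℝ) 0 ∘ WithLp.ofLp ∘ b.repr,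
    (volume_preserving_piFinSuccAbove _ 0).comp
      ((PiLp.volume_preserving_ofLp _).comp b.measurePreserving_repr), fun x ↦ ⟨?_, ?_⟩⟩
  · simp [b.repr_apply_apply, hb 0 rfl, real_inner_comm]
  · rw [← b.repr.norm_map, EuclideanSpace.norm_sq_eq, Fin.sum_univ_succAbove _ 0]
    simp [MeasurableEquiv.piFinSuccAbove_apply, Fin.tail]

theorem volume_cone {E : Type*} [NormedAddCommGroup E] [InnerProductSpace ℝ E]
    [MeasurableSpace E] [BorelSpace E] [FiniteDimensional ℝ E] (hE : finrank ℝ E = 3)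
    {u : E} (hu : ‖u‖ = 1) {d : ℝ} (hd0 : 0 < d) (hd1 : d < 1) :
    volume {x : E | ‖x‖ < 1 ∧ d * ‖x‖ < ⟪x, u⟫} = ENNReal.ofReal (2 * π / 3 * (1 - d)) := by
  obtain ⟨Φ, hΦ, hΦx⟩ := exists_measurePreserving_inner_fst hE hu
  set ρ : ℝ → ℝ := fun t ↦ min (1 - t ^ 2) ((1 - d ^ 2) / d ^ 2 * t ^ 2)
  have hρ : Measurable ρ := by fun_prop
  have hcone : {x : E | ‖x‖ < 1 ∧ d * ‖x‖ < ⟪x, u⟫} =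
      Φ ⁻¹' {p | p.1 ∈ Ioc 0 1 ∧ ∑ j, p.2 j ^ 2 < ρ p.1} := by
    ext x
    obtain ⟨hfst, hnorm⟩ := hΦx x
    rw [mem_preimage, mem_ofPred_eq, mem_ofPred_eq, ← hfst]
    exact cone_iff_mem_solidOfRevolution hd0 (norm_nonneg x) (by positivity) hnorm
  rw [hcone, hΦ.measure_preimage, volume_solidOfRevolution measurableSet_Ioc hρ,
    lintegral_cone_profile hd0 hd1]
  exact ((measurable_fst measurableSet_Ioc).inter
    (measurableSet_lt (by fun_prop) (hρ.comp measurable_fst))).nullMeasurableSet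

theorem Ioo_smul_image_setOf_lt_inner {E : Type*} [NormedAddCommGroup E]
    [InnerProductSpace ℝ E] (u : E) (d : ℝ) :
    Ioo (0 : ℝ) 1 • ((↑) '' {v : sphere (0 : E) 1 | d < ⟪(v : E), u⟫}) =
      {x : E | ‖x‖ < 1 ∧ d * ‖x‖ < ⟪x, u⟫} := by
  ext x
  simp only [Set.mem_smul, mem_image, mem_ofPred_eq, mem_Ioo]
  constructor
  · rintro ⟨r, ⟨hr0, hr1⟩, _, ⟨v, hv, rfl⟩, rfl⟩
    have hvr : ‖r • (v : E)‖ = r := by simp [norm_smul, abs_of_pos hr0]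
    rw [hvr, real_inner_smul_left, mul_comm d]
    exact ⟨hr1, mul_lt_mul_of_pos_left hv hr0⟩
  · rintro ⟨hx1, hx⟩
    have hx0 : 0 < ‖x‖ := norm_pos_iff.2 (by rintro rfl; simp at hx)
    refine ⟨‖x‖, ⟨hx0, hx1⟩, ‖x‖⁻¹ • x, ⟨⟨‖x‖⁻¹ • x, ?_⟩, ?_, rfl⟩, ?_⟩
    · simp [norm_smul, hx0.ne']
    · show d < ⟪‖x‖⁻¹ • x, u⟫
      rwa [real_inner_smul_left, inv_mul_eq_div, lt_div_iff₀ hx0]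
    · simp [smul_smul, hx0.ne']

local notation "ℝ³" => EuclideanSpace ℝ (Fin 3)

instance : IsProbabilityMeasure sphereUniform := by
  have : NeZero (volume : Measure ℝ³).toSphere := ⟨Measure.toSphere_ne_zero _⟩
  unfold sphereUniform
  infer_instance

theorem sphereUniform_setOf_lt_inner_of_pos {u : ℝ³} (hu : ‖u‖ = 1) {d : ℝ} (hd0 : 0 < d)
    (hd1 : d < 1) :
    sphereUniform {v | d < ⟪(v : ℝ³), u⟫} = ENNReal.ofReal ((1 - d) / 2) := by
  rw [sphereUniform, Measure.smul_apply, smul_eq_mul, Measure.toSphere_apply_univ,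
    Measure.toSphere_apply' _ (measurableSet_lt measurable_const (by fun_prop)),
    Ioo_smul_image_setOf_lt_inner, volume_cone finrank_euclideanSpace_fin hu hd0 hd1,
    EuclideanSpace.volume_ball_fin_three, finrank_euclideanSpace_fin, ENNReal.ofReal_one, one_pow, one_mul,
    ENNReal.mul_inv (by simp) (by simp), mul_mul_mul_comm,
    ENNReal.inv_mul_cancel (by simp) (by simp), one_mul,
    ← ENNReal.ofReal_inv_of_pos (by positivity), ← ENNReal.ofReal_mul (by positivity)]
  congr 1
  field_simp
  ring

theorem sphereUniform_setOf_le_inner_of_pos {u : ℝ³} (hu : ‖u‖ = 1) {d : ℝ} (hd0 : 0 < d)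
    (hd1 : d < 1) :
    sphereUniform {v | d ≤ ⟪(v : ℝ³), u⟫} = ENNReal.ofReal ((1 - d) / 2) :=
  measure_setOf_le_eq_of_measure_setOf_lt (by fun_prop) hd0
    (ENNReal.continuous_ofReal.comp (by fun_prop)).continuousWithinAt
    fun _ hs ↦ sphereUniform_setOf_lt_inner_of_pos hu hs.1 (hs.2.trans hd1)

theorem sphereUniform_setOf_pos_inner {u : ℝ³} (hu : ‖u‖ = 1) :
    sphereUniform {v | 0 < ⟪(v : ℝ³), u⟫} = ENNReal.ofReal (1 / 2) := by
  simpa using measure_setOf_lt_eq_of_measure_setOf_lt zero_lt_one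
    (ENNReal.continuous_ofReal.comp (by fun_prop)).continuousWithinAt
    fun _ hs ↦ sphereUniform_setOf_lt_inner_of_pos hu hs.1 hs.2

theorem sphereUniform_setOf_le_inner_eq_one_sub (u : ℝ³) (d : ℝ) :
    sphereUniform {v | d ≤ ⟪(v : ℝ³), u⟫} = 1 - sphereUniform {v | -d < ⟪(v : ℝ³), -u⟫} := by
  rw [← prob_compl_eq_one_sub (measurableSet_lt measurable_const (by fun_prop))]
  congr 1
  ext v
  simp [inner_neg_right]

theorem sphereUniform_setOf_lt_inner_eq_one_sub (u : ℝ³) (d : ℝ) :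
    sphereUniform {v | d < ⟪(v : ℝ³), u⟫} = 1 - sphereUniform {v | -d ≤ ⟪(v : ℝ³), -u⟫} := by
  rw [← prob_compl_eq_one_sub (measurableSet_le measurable_const (by fun_prop))]
  congr 1
  ext v
  simp [inner_neg_right]

theorem one_sub_ofReal_half_sub_neg {d : ℝ} (hd : -1 ≤ d) :
    1 - ENNReal.ofReal ((1 - -d) / 2) = ENNReal.ofReal ((1 - d) / 2) := by
  rw [← ENNReal.ofReal_one, ← ENNReal.ofReal_sub _ (by linarith)]
  congr 1
  ring

theorem sphereUniform_setOf_lt_inner {u : ℝ³} (hu : ‖u‖ = 1) {d : ℝ}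
    (hd : d ∈ Ioo (-1 : ℝ) 1) :
    sphereUniform {v | d < ⟪(v : ℝ³), u⟫} = ENNReal.ofReal ((1 - d) / 2) := by
  rcases lt_trichotomy d 0 with hneg | rfl | hpos
  · rw [sphereUniform_setOf_lt_inner_eq_one_sub, sphereUniform_setOf_le_inner_of_pos
      (by rwa [norm_neg]) (neg_pos.2 hneg) (by linarith [hd.1]),
      one_sub_ofReal_half_sub_neg hd.1.le]
  · simpa using sphereUniform_setOf_pos_inner hu
  · exact sphereUniform_setOf_lt_inner_of_pos hu hpos hd.2

theorem sphereUniform_setOf_le_inner {u : ℝ³} (hu : ‖u‖ = 1) {d : ℝ}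
    (hd : d ∈ Ioo (-1 : ℝ) 1) :
    sphereUniform {v | d ≤ ⟪(v : ℝ³), u⟫} = ENNReal.ofReal ((1 - d) / 2) := by
  rw [sphereUniform_setOf_le_inner_eq_one_sub, sphereUniform_setOf_lt_inner (by rwa [norm_neg])
    ⟨by linarith [hd.2], by linarith [hd.1]⟩, one_sub_ofReal_half_sub_neg hd.1.le]

theorem sphereUniform_setOf_inner_lt {u : ℝ³} (hu : ‖u‖ = 1) {d : ℝ}
    (hd : d ∈ Ioo (-1 : ℝ) 1) :
    sphereUniform {v | ⟪(v : ℝ³), u⟫ < d} = ENNReal.ofReal ((1 + d) / 2) := by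
  simpa [inner_neg_right, sub_eq_add_neg] using
    sphereUniform_setOf_lt_inner (u := -u) (d := -d) (by rwa [norm_neg])
      ⟨by linarith [hd.2], by linarith [hd.1]⟩

theorem sphereUniform_setOf_inner_le {u : ℝ³} (hu : ‖u‖ = 1) {d : ℝ}
    (hd : d ∈ Ioo (-1 : ℝ) 1) :
    sphereUniform {v | ⟪(v : ℝ³), u⟫ ≤ d} = ENNReal.ofReal ((1 + d) / 2) := by
  simpa [inner_neg_right, sub_eq_add_neg] using
    sphereUniform_setOf_le_inner (u := -u) (d := -d) (by rwa [norm_neg])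
      ⟨by linarith [hd.2], by linarith [hd.1]⟩

theorem stmt_8 (u : EuclideanSpace ℝ (Fin 3)) (hu : ‖u‖ = 1)
    (d : ℝ) (hd : d ∈ Set.Ioo (-1 : ℝ) 1) :
    -- outcome o₁ᵘ : eigenstate set, overall probability, possibility set all equal (1-d)/2
    sphereUniform {v | d < ⟪(v : EuclideanSpace ℝ (Fin 3)), u⟫} = ENNReal.ofReal ((1 - d) / 2) ∧
    (∫ v, (if d < ⟪(v : EuclideanSpace ℝ (Fin 3)), u⟫ then (1 : ℝ) else 0) ∂sphereUniform)
      = (1 - d) / 2 ∧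
    sphereUniform {v | d ≤ ⟪(v : EuclideanSpace ℝ (Fin 3)), u⟫} = ENNReal.ofReal ((1 - d) / 2) ∧
    -- outcome o₂ᵘ : eigenstate set, overall probability, possibility set all equal (1+d)/2
    sphereUniform {v | ⟪(v : EuclideanSpace ℝ (Fin 3)), u⟫ < d} = ENNReal.ofReal ((1 + d) / 2) ∧
    (∫ v, (if ⟪(v : EuclideanSpace ℝ (Fin 3)), u⟫ < d then (1 : ℝ) else 0) ∂sphereUniform)
      = (1 + d) / 2 ∧
    sphereUniform {v | ⟪(v : EuclideanSpace ℝ (Fin 3)), u⟫ ≤ d} = ENNReal.ofReal ((1 + d) / 2)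
    := by
  have h₁ := sphereUniform_setOf_lt_inner hu hd
  have h₂ := sphereUniform_setOf_inner_lt hu hd
  refine ⟨h₁, ?_, sphereUniform_setOf_le_inner hu hd, h₂, ?_, sphereUniform_setOf_inner_le hu hd⟩
  · rw [integral_ite_one (measurableSet_lt measurable_const (by fun_prop)), measureReal_def, h₁,
      ENNReal.toReal_ofReal (by linarith [hd.2])]
  · rw [integral_ite_one (measurableSet_lt (by fun_prop) measurable_const), measureReal_def, h₂,
      ENNReal.toReal_ofReal (by linarith [hd.1])]
end

section
/- In the ε-model with ε = 0 and d = 0, with μ uniform on S², the conditional probability P(u, w, μ) that experiment e⁰_{u,0} gives outcome o₁ᵘ after conditioning on outcome o₁ʷ of e⁰_{w,0} equals 1 - α/π, where α is the angle between u and w. -/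
/-!
Conditioning on the hemisphere `0 < ⟪v, w⟫` makes the probability the ratio of the areas of the
lune `0 < ⟪v, u⟫, 0 < ⟪v, w⟫` and of that hemisphere. The `toSphere` measure of a set of directions
is three times the volume of the cone it spans in the unit ball. In an orthonormal basis
`e₀, e₁ = u, e₂` with `w = cos α • e₁ + sin α • e₂`, the cone over the lune is
`{z² + x² + y² < 1, (x, y) ∈ W}` for a planar wedge `W` of opening `π - α`. Its slice at height
`z` is a disc sector of radius `√(1 - z²)`, so its volume is `(∫ (1 - z²) dz) · (π - α) / 2
= 2 (π - α) / 3`, and the lune has area `2 (π - α)` (the hemisphere being the case `u = w`).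
-/

open MeasureTheory Metric ProbabilityTheory
open scoped RealInnerProductSpace

open Set Module InnerProductSpace InnerProductGeometry
open scoped Real ENNReal Pointwise

theorem smul_mem_iff_of_forall_smul_mem {E : Type*} [AddCommGroup E] [Module ℝ E] {K : Set E}
    (hK : ∀ r : ℝ, 0 < r → ∀ x ∈ K, r • x ∈ K) {r : ℝ} (hr : 0 < r) {x : E} :
    r • x ∈ K ↔ x ∈ K :=
  ⟨fun h => by simpa [smul_smul, hr.ne'] using hK r⁻¹ (inv_pos.2 hr) _ h, hK r hr x⟩

section Sphere

variable {E : Type*} [NormedAddCommGroup E] [NormedSpace ℝ E] {K : Set E}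

theorem Ioo_smul_coe_sphere_setOf_mem_cone (hK0 : (0 : E) ∉ K)
    (hK : ∀ r : ℝ, 0 < r → ∀ x ∈ K, r • x ∈ K) :
    Ioo (0 : ℝ) 1 • ((↑) '' {v : sphere (0 : E) 1 | (v : E) ∈ K}) = ball 0 1 ∩ K := by
  ext x
  constructor
  · rintro ⟨r, hr, _, ⟨v, hv, rfl⟩, rfl⟩
    refine ⟨?_, hK r hr.1 v hv⟩
    rw [mem_ball_zero_iff, norm_smul, norm_eq_of_mem_sphere v, mul_one,
      Real.norm_of_nonneg hr.1.le]
    exact hr.2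
  · rintro ⟨hx1, hxK⟩
    have hx : 0 < ‖x‖ := norm_pos_iff.2 (ne_of_mem_of_not_mem hxK hK0)
    refine ⟨‖x‖, ⟨hx, mem_ball_zero_iff.1 hx1⟩, ‖x‖⁻¹ • x, ⟨⟨‖x‖⁻¹ • x, ?_⟩, ?_, rfl⟩,
      smul_inv_smul₀ hx.ne' x⟩
    · rw [mem_sphere_zero_iff_norm, norm_smul, norm_inv, norm_norm, inv_mul_cancel₀ hx.ne']
    · exact hK _ (inv_pos.2 hx) x hxK

theorem MeasureTheory.Measure.toSphere_setOf_mem_cone [MeasurableSpace E] [BorelSpace E]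
    (μ : Measure E) (hKm : MeasurableSet K) (hK0 : (0 : E) ∉ K)
    (hK : ∀ r : ℝ, 0 < r → ∀ x ∈ K, r • x ∈ K) :
    μ.toSphere {v | (v : E) ∈ K} = finrank ℝ E * μ (ball 0 1 ∩ K) := by
  rw [μ.toSphere_apply' (s := {v | (v : E) ∈ K}) (measurable_subtype_coe hKm),
    Ioo_smul_coe_sphere_setOf_mem_cone hK0 hK]

end Sphere

section Plane

theorem Real.cos_pos_iff_abs_lt {x : ℝ} (hx : |x| ≤ 3 * π / 2) :
    0 < Real.cos x ↔ |x| < π / 2 := by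
  refine ⟨fun h => ?_, fun h => Real.cos_pos_of_mem_Ioo (abs_lt.1 h)⟩
  by_contra! hle
  rw [← Real.cos_abs] at h
  exact h.not_ge (Real.cos_nonpos_of_pi_div_two_le_of_le hle (by linarith))

theorem cos_pos_and_cos_sub_pos_iff {α θ : ℝ} (hα₀ : 0 ≤ α) (hαπ : α ≤ π)
    (hθ : θ ∈ Ioo (-π) π) :
    0 < Real.cos θ ∧ 0 < Real.cos (θ - α) ↔ θ ∈ Ioo (α - π / 2) (π / 2) := by
  obtain ⟨hθ₁, hθ₂⟩ := hθ
  rw [Real.cos_pos_iff_abs_lt (abs_le.2 ⟨by linarith, by linarith⟩)]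
  have : |θ| < π / 2 → (0 < Real.cos (θ - α) ↔ |θ - α| < π / 2) := fun h =>
    Real.cos_pos_iff_abs_lt (abs_le.2 ⟨by linarith [(abs_lt.1 h).1], by linarith [(abs_lt.1 h).2]⟩)
  rw [and_congr_right this, mem_Ioo, abs_lt, abs_lt]
  constructor
  · rintro ⟨⟨_, h₂⟩, h₃, _⟩; exact ⟨by linarith, h₂⟩
  · rintro ⟨h₁, h₂⟩; exact ⟨⟨by linarith, h₂⟩, by linarith, by linarith⟩

theorem setLIntegral_Ioo_zero_one_ofReal :
    ∫⁻ r in Ioo (0 : ℝ) 1, ENNReal.ofReal r = ENNReal.ofReal (1 / 2) := by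
  rw [← ofReal_integral_eq_lintegral_ofReal, integral_Ioc_eq_integral_Ioo.symm,
    ← intervalIntegral.integral_of_le zero_le_one, integral_id]
  · norm_num
  · exact (continuous_id.integrableOn_Icc (a := 0) (b := 1)).mono_set Ioo_subset_Icc_self
  · filter_upwards [ae_restrict_mem measurableSet_Ioo] with r hr using hr.1.le

theorem volume_unitDisk_inter_of_polarCoord {C : Set (ℝ × ℝ)} (hC : MeasurableSet C) {a b : ℝ}
    (ha : -π ≤ a) (hb : b ≤ π)
    (hCθ : ∀ r θ, 0 < r → θ ∈ Ioo (-π) π → (polarCoord.symm (r, θ) ∈ C ↔ θ ∈ Ioo a b)) :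
    volume {p : ℝ × ℝ | p.1 ^ 2 + p.2 ^ 2 < 1 ∧ p ∈ C} = ENNReal.ofReal ((b - a) / 2) := by
  set S := {p : ℝ × ℝ | p.1 ^ 2 + p.2 ^ 2 < 1 ∧ p ∈ C}
  have hS : MeasurableSet S :=
    (measurableSet_lt (f := fun p : ℝ × ℝ => p.1 ^ 2 + p.2 ^ 2) (by fun_prop)
      measurable_const).inter hC
  have hmem : ∀ p ∈ polarCoord.target, polarCoord.symm p ∈ S ↔ p ∈ Ioo 0 1 ×ˢ Ioo a b := by
    rintro ⟨r, θ⟩ ⟨hr, hθ⟩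
    have hnorm : (r * Real.cos θ) ^ 2 + (r * Real.sin θ) ^ 2 = r ^ 2 := by
      linear_combination r ^ 2 * Real.cos_sq_add_sin_sq θ
    change (polarCoord.symm (r, θ)).1 ^ 2 + (polarCoord.symm (r, θ)).2 ^ 2 < 1 ∧
      polarCoord.symm (r, θ) ∈ C ↔ _
    rw [hCθ r θ hr hθ, polarCoord_symm_apply, hnorm, sq_lt_one_iff₀ (le_of_lt hr)]
    simp only [mem_prod, mem_Ioo, true_and, show 0 < r from hr]
  have hsub : Ioo 0 1 ×ˢ Ioo a b ⊆ polarCoord.target := by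
    rw [polarCoord_target]
    exact prod_mono (fun r hr => hr.1) (Ioo_subset_Ioo ha hb)
  calc volume S = ∫⁻ p, S.indicator 1 p := (lintegral_indicator_one hS).symm
    _ = ∫⁻ p in polarCoord.target,
          (Ioo 0 1 ×ˢ Ioo a b).indicator (fun p => ENNReal.ofReal p.1) p := by
      rw [← lintegral_comp_polarCoord_symm]
      refine setLIntegral_congr_fun polarCoord.open_target.measurableSet fun p hp => ?_
      by_cases h : p ∈ Ioo 0 1 ×ˢ Ioo a b
      · rw [indicator_of_mem h, indicator_of_mem ((hmem p hp).2 h), Pi.one_apply, smul_eq_mul,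
          mul_one]
      · rw [indicator_of_notMem h, indicator_of_notMem (mt (hmem p hp).1 h), smul_zero]
    _ = ∫⁻ p in Ioo 0 1 ×ˢ Ioo a b, ENNReal.ofReal p.1 := by
      rw [setLIntegral_indicator (measurableSet_Ioo.prod measurableSet_Ioo), inter_eq_left.2 hsub]
    _ = ENNReal.ofReal ((b - a) / 2) := by
      rw [Measure.volume_eq_prod, ← Measure.prod_restrict, lintegral_prod _ (by fun_prop)]
      simp only [lintegral_const, Measure.restrict_apply_univ, Real.volume_Ioo]
      rw [lintegral_mul_const _ (by fun_prop), setLIntegral_Ioo_zero_one_ofReal,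
        ← ENNReal.ofReal_mul (by norm_num)]
      ring_nf

def wedge (α : ℝ) : Set (ℝ × ℝ) :=
  {p | 0 < p.1 ∧ 0 < Real.cos α * p.1 + Real.sin α * p.2}

theorem measurableSet_wedge (α : ℝ) : MeasurableSet (wedge α) :=
  (measurableSet_lt measurable_const measurable_fst).inter
    (measurableSet_lt (g := fun p : ℝ × ℝ => Real.cos α * p.1 + Real.sin α * p.2) measurable_const
      (by fun_prop))

theorem smul_mem_wedge {α r : ℝ} (hr : 0 < r) {p : ℝ × ℝ} (hp : p ∈ wedge α) :
    r • p ∈ wedge α := by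
  refine ⟨mul_pos hr hp.1, ?_⟩
  simpa [mul_left_comm _ r, ← mul_add] using mul_pos hr hp.2

theorem volume_unitDisk_inter_wedge {α : ℝ} (hα₀ : 0 ≤ α) (hαπ : α ≤ π) :
    volume {p : ℝ × ℝ | p.1 ^ 2 + p.2 ^ 2 < 1 ∧ p ∈ wedge α} = ENNReal.ofReal ((π - α) / 2) := by
  rw [volume_unitDisk_inter_of_polarCoord (measurableSet_wedge α) (a := α - π / 2)
    (b := π / 2) (by linarith) (by linarith)]
  · ring_nf
  intro r θ hr hθ
  have hcos : Real.cos α * (r * Real.cos θ) + Real.sin α * (r * Real.sin θ) =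
      r * Real.cos (θ - α) := by
    rw [Real.cos_sub]; ring
  rw [← cos_pos_and_cos_sub_pos_iff hα₀ hαπ hθ]
  simp only [wedge, mem_ofPred_eq, polarCoord_symm_apply, hcos, mul_pos_iff_of_pos_left hr]

end Plane

section Space

theorem lintegral_ofReal_one_sub_sq :
    ∫⁻ z : ℝ, ENNReal.ofReal (1 - z ^ 2) = ENNReal.ofReal (4 / 3) := by
  have hsupp : Function.support (fun z : ℝ => ENNReal.ofReal (1 - z ^ 2)) ⊆ Icc (-1) 1 := by
    intro z hz
    rw [Function.mem_support, ENNReal.ofReal_ne_zero_iff, sub_pos, sq_lt_one_iff_abs_lt_one] at hz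
    exact abs_le.1 hz.le
  rw [← setLIntegral_eq_of_support_subset hsupp, ← ofReal_integral_eq_lintegral_ofReal,
    integral_Icc_eq_integral_Ioc, ← intervalIntegral.integral_of_le (by norm_num),
    intervalIntegral.integral_sub intervalIntegrable_const
      ((continuous_pow 2).intervalIntegrable _ _),
    intervalIntegral.integral_const, integral_pow]
  · norm_num
  · exact (by fun_prop : Continuous fun z : ℝ => 1 - z ^ 2).integrableOn_Icc
  · filter_upwards [ae_restrict_mem measurableSet_Icc] with z hz
    simpa [sq_le_one_iff_abs_le_one, abs_le] using hz

variable {C : Set (ℝ × ℝ)}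

theorem measurableSet_unitBall_inter_prod (hCm : MeasurableSet C) :
    MeasurableSet {q : ℝ × ℝ × ℝ | q.1 ^ 2 + q.2.1 ^ 2 + q.2.2 ^ 2 < 1 ∧ q.2 ∈ C} :=
  (measurableSet_lt (f := fun q : ℝ × ℝ × ℝ => q.1 ^ 2 + q.2.1 ^ 2 + q.2.2 ^ 2) (by fun_prop)
    measurable_const).inter (hCm.preimage measurable_snd)

theorem preimage_mk_unitBall_inter_prod_cone (hC : ∀ r : ℝ, 0 < r → ∀ p ∈ C, r • p ∈ C)
    {z s : ℝ} (hs : 0 < s) (hzs : z ^ 2 + s ^ 2 = 1) :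
    Prod.mk z ⁻¹' {q : ℝ × ℝ × ℝ | q.1 ^ 2 + q.2.1 ^ 2 + q.2.2 ^ 2 < 1 ∧ q.2 ∈ C} =
      s • {p : ℝ × ℝ | p.1 ^ 2 + p.2 ^ 2 < 1 ∧ p ∈ C} := by
  ext p
  rw [mem_smul_set_iff_inv_smul_mem₀ hs.ne']
  change z ^ 2 + p.1 ^ 2 + p.2 ^ 2 < 1 ∧ p ∈ C ↔
    (s⁻¹ * p.1) ^ 2 + (s⁻¹ * p.2) ^ 2 < 1 ∧ s⁻¹ • p ∈ C
  rw [smul_mem_iff_of_forall_smul_mem hC (inv_pos.2 hs), mul_pow, mul_pow, ← mul_add,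
    inv_pow, inv_mul_lt_one₀ (by positivity), ← hzs, add_assoc, add_lt_add_iff_left]

theorem volume_unitBall_inter_prod_cone (hCm : MeasurableSet C)
    (hC : ∀ r : ℝ, 0 < r → ∀ p ∈ C, r • p ∈ C) :
    volume {q : ℝ × ℝ × ℝ | q.1 ^ 2 + q.2.1 ^ 2 + q.2.2 ^ 2 < 1 ∧ q.2 ∈ C} =
      ENNReal.ofReal (4 / 3) * volume {p : ℝ × ℝ | p.1 ^ 2 + p.2 ^ 2 < 1 ∧ p ∈ C} := by
  have hS := measurableSet_unitBall_inter_prod hCm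
  set S := {q : ℝ × ℝ × ℝ | q.1 ^ 2 + q.2.1 ^ 2 + q.2.2 ^ 2 < 1 ∧ q.2 ∈ C}
  have hslice : ∀ z : ℝ, volume (Prod.mk z ⁻¹' S) =
      ENNReal.ofReal (1 - z ^ 2) * volume {p : ℝ × ℝ | p.1 ^ 2 + p.2 ^ 2 < 1 ∧ p ∈ C} := by
    intro z
    rcases le_or_gt (1 - z ^ 2) 0 with hz | hz
    · have hempty : Prod.mk z ⁻¹' S = ∅ := eq_empty_of_forall_notMem fun p hp => by
        have hp' : z ^ 2 + p.1 ^ 2 + p.2 ^ 2 < 1 := hp.1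
        nlinarith [sq_nonneg p.1, sq_nonneg p.2]
      rw [ENNReal.ofReal_of_nonpos hz, zero_mul, hempty, measure_empty]
    · rw [preimage_mk_unitBall_inter_prod_cone hC (Real.sqrt_pos.2 hz)
          (by rw [Real.sq_sqrt hz.le]; ring),
        Measure.addHaar_smul_of_nonneg _ (Real.sqrt_nonneg _)]
      simp [Real.sq_sqrt hz.le]
  rw [Measure.volume_eq_prod, Measure.prod_apply hS]
  simp_rw [hslice]
  rw [lintegral_mul_const _ (by fun_prop), lintegral_ofReal_one_sub_sq]

end Space

section InnerProductSpace

variable {E : Type*} [NormedAddCommGroup E] [InnerProductSpace ℝ E]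

theorem norm_sub_cos_angle_smul {u w : E} (hu : ‖u‖ = 1) (hw : ‖w‖ = 1) :
    ‖w - Real.cos (angle u w) • u‖ = Real.sin (angle u w) := by
  have hcos : Real.cos (angle u w) = ⟪u, w⟫ := by simp [cos_angle, hu, hw]
  have hsq : ‖w - Real.cos (angle u w) • u‖ ^ 2 = Real.sin (angle u w) ^ 2 := by
    rw [norm_sub_sq_real, norm_smul, real_inner_smul_right, hu, hw, Real.sin_sq, real_inner_comm,
      hcos, Real.norm_eq_abs, mul_one, sq_abs]
    ring
  exact (pow_left_inj₀ (norm_nonneg _) (sin_angle_nonneg u w) two_ne_zero).mp hsq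

theorem measurableSet_setOf_inner_pos [MeasurableSpace E] [OpensMeasurableSpace E] (u : E) :
    MeasurableSet {x : E | 0 < ⟪x, u⟫} :=
  (isOpen_lt continuous_const (continuous_id.inner continuous_const)).measurableSet

variable [FiniteDimensional ℝ E]

theorem exists_orthonormalBasis_eq_and_norm_smul_eq {n : ℕ} (hn : finrank ℝ E = n)
    {i j : Fin n} (hij : i ≠ j) {u v : E} (hu : ‖u‖ = 1) (huv : ⟪u, v⟫ = 0) :
    ∃ b : OrthonormalBasis (Fin n) ℝ E, b i = u ∧ ‖v‖ • b j = v := by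
  have hcard : finrank ℝ E = Fintype.card (Fin n) := by simp [hn]
  set f : Fin n → E := fun k => if k = i then u else if k = j then v else 0
  have hf : Pairwise fun k l => ⟪f k, f l⟫ = 0 := by
    intro k l hkl
    simp only [f]
    split_ifs <;> simp_all [real_inner_comm]
  refine ⟨gramSchmidtOrthonormalBasis hcard f, ?_, ?_⟩
  · rw [gramSchmidtOrthonormalBasis_apply_of_orthogonal hcard hf
      (by simp [f, ← norm_ne_zero_iff, hu])]
    simp [f, hu]
  · rcases eq_or_ne v 0 with rfl | hv
    · simp
    rw [gramSchmidtOrthonormalBasis_apply_of_orthogonal hcard hf (by simpa [f, hij.symm] using hv)]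
    simp [f, hij.symm, smul_smul, hv]

theorem exists_orthonormalBasis_eq_cos_smul_add_sin_smul {n : ℕ} (hn : finrank ℝ E = n)
    {i j : Fin n} (hij : i ≠ j) {u w : E} (hu : ‖u‖ = 1) (hw : ‖w‖ = 1) :
    ∃ b : OrthonormalBasis (Fin n) ℝ E,
      b i = u ∧ w = Real.cos (angle u w) • b i + Real.sin (angle u w) • b j := by
  have huv : ⟪u, w - Real.cos (angle u w) • u⟫ = 0 := by
    rw [inner_sub_right, real_inner_smul_right, real_inner_self_eq_norm_sq, hu, cos_angle, hu, hw]
    ring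
  obtain ⟨b, hbi, hbj⟩ := exists_orthonormalBasis_eq_and_norm_smul_eq hn hij hu huv
  refine ⟨b, hbi, ?_⟩
  rw [hbi, ← norm_sub_cos_angle_smul hu hw, hbj, add_sub_cancel]

variable [MeasurableSpace E] [BorelSpace E]

theorem OrthonormalBasis.measurePreserving_coords (b : OrthonormalBasis (Fin 3) ℝ E) :
    MeasurePreserving (fun x => (b.repr x 0, b.repr x 1, b.repr x 2)) :=
  ((MeasurePreserving.id volume).prod (volume_preserving_finTwoArrow ℝ)).comp
    ((volume_preserving_piFinSuccAbove (fun _ : Fin 3 => ℝ) 0).comp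
      ((PiLp.volume_preserving_ofLp (Fin 3)).comp b.measurePreserving_repr))

theorem volume_unitBall_inter_inner_pos (hE : finrank ℝ E = 3) {u w : E} (hu : ‖u‖ = 1)
    (hw : ‖w‖ = 1) :
    volume (ball 0 1 ∩ ({x | 0 < ⟪x, u⟫} ∩ {x | 0 < ⟪x, w⟫})) =
      ENNReal.ofReal (2 * (π - angle u w) / 3) := by
  -- coordinate `0` is the height `z` along which `volume_unitBall_inter_prod_cone` slices
  obtain ⟨b, rfl, hbw⟩ :=
    exists_orthonormalBasis_eq_cos_smul_add_sin_smul hE (i := 1) (j := 2) (by decide) hu hw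
  set α := angle (b 1) w
  have hpre : ball 0 1 ∩ ({x | 0 < ⟪x, b 1⟫} ∩ {x | 0 < ⟪x, w⟫}) =
      (fun x => (b.repr x 0, b.repr x 1, b.repr x 2)) ⁻¹'
        {q : ℝ × ℝ × ℝ | q.1 ^ 2 + q.2.1 ^ 2 + q.2.2 ^ 2 < 1 ∧ q.2 ∈ wedge α} := by
    ext x
    have hnorm : ‖x‖ ^ 2 = ⟪b 0, x⟫ ^ 2 + ⟪b 1, x⟫ ^ 2 + ⟪b 2, x⟫ ^ 2 := by
      rw [← b.sum_sq_inner_right, Fin.sum_univ_three]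
    have hxw : ⟪x, w⟫ = Real.cos α * ⟪b 1, x⟫ + Real.sin α * ⟪b 2, x⟫ := by
      rw [hbw, inner_add_right, real_inner_smul_right, real_inner_smul_right, real_inner_comm x,
        real_inner_comm x]
    simp only [mem_inter_iff, mem_ball_zero_iff, mem_ofPred_eq, mem_preimage, wedge,
      b.repr_apply_apply, ← sq_lt_one_iff₀ (norm_nonneg x), hnorm, hxw, real_inner_comm (b 1) x]
  rw [hpre, b.measurePreserving_coords.measure_preimage
      (measurableSet_unitBall_inter_prod (measurableSet_wedge α)).nullMeasurableSet,
    volume_unitBall_inter_prod_cone (measurableSet_wedge α) fun _ hr _ => smul_mem_wedge hr,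
    volume_unitDisk_inter_wedge (angle_nonneg _ w) (angle_le_pi _ w),
    ← ENNReal.ofReal_mul (by norm_num)]
  congr 1
  ring

theorem toSphere_inter_setOf_inner_pos (hE : finrank ℝ E = 3) {u w : E} (hu : ‖u‖ = 1)
    (hw : ‖w‖ = 1) :
    (volume : Measure E).toSphere ({v | 0 < ⟪(v : E), u⟫} ∩ {v | 0 < ⟪(v : E), w⟫}) =
      ENNReal.ofReal (2 * (π - angle u w)) := by
  have hcone : ∀ r : ℝ, 0 < r → ∀ x ∈ {x : E | 0 < ⟪x, u⟫} ∩ {x | 0 < ⟪x, w⟫},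
      r • x ∈ {x : E | 0 < ⟪x, u⟫} ∩ {x | 0 < ⟪x, w⟫} := fun r hr x hx => by
    simp only [mem_inter_iff, mem_ofPred_eq, real_inner_smul_left] at hx ⊢
    exact ⟨mul_pos hr hx.1, mul_pos hr hx.2⟩
  refine (Measure.toSphere_setOf_mem_cone volume
    ((measurableSet_setOf_inner_pos u).inter (measurableSet_setOf_inner_pos w)) (by simp)
    hcone).trans ?_
  rw [volume_unitBall_inter_inner_pos hE hu hw, hE, Nat.cast_ofNat, ← ENNReal.ofReal_ofNat,
    ← ENNReal.ofReal_mul (by norm_num)]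
  congr 1
  ring

theorem toSphere_setOf_inner_pos (hE : finrank ℝ E = 3) {w : E} (hw : ‖w‖ = 1) :
    (volume : Measure E).toSphere {v | 0 < ⟪(v : E), w⟫} = ENNReal.ofReal (2 * π) := by
  have hw0 : w ≠ 0 := by rintro rfl; simp at hw
  simpa [angle_self hw0] using toSphere_inter_setOf_inner_pos hE hw hw

end InnerProductSpace

theorem stmt_11 (u w : EuclideanSpace ℝ (Fin 3)) (hu : ‖u‖ = 1) (hw : ‖w‖ = 1) :
    (sphereUniform[|{v | 0 < ⟪(v : EuclideanSpace ℝ (Fin 3)), w⟫}])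
        {v | 0 < ⟪(v : EuclideanSpace ℝ (Fin 3)), u⟫} =
      ENNReal.ofReal (1 - InnerProductGeometry.angle u w / Real.pi) := by
  have hdim := finrank_euclideanSpace_fin (𝕜 := ℝ) (n := 3)
  have hH : MeasurableSet {v : sphere (0 : EuclideanSpace ℝ (Fin 3)) 1 | 0 < ⟪v.1, w⟫} :=
    measurable_subtype_coe (measurableSet_setOf_inner_pos w)
  have huniform : sphereUniform = volume.toSphere[|univ] := by
    rw [ProbabilityTheory.cond, Measure.restrict_univ]; rfl
  rw [huniform, cond_cond_eq_cond_inter .univ hH, univ_inter, cond_apply hH,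
    toSphere_inter_setOf_inner_pos hdim hw hu, angle_comm, toSphere_setOf_inner_pos hdim hw,
    ← ENNReal.ofReal_inv_of_pos (by positivity), ← ENNReal.ofReal_mul (by positivity)]
  congr 1
  field_simp
end

section
/- There is no Kolmogorovian probability model for the data: there do not exist a probability space (X, B, ν) and events U, V, W ∈ B with ν(W) = ν(V) = 1/2, ν(V ∩ W) = 0.39, ν(U ∩ W) = 0.11, and ν(Uᶜ ∩ V) = 0.11. -/
open MeasureTheory

theorem stmt_12 :
    ¬ ∃ (X : Type) (_ : MeasurableSpace X) (ν : Measure X) (_ : IsProbabilityMeasure ν)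
        (U V W : Set X), MeasurableSet U ∧ MeasurableSet V ∧ MeasurableSet W ∧
      ν W = ENNReal.ofReal (1 / 2) ∧ ν V = ENNReal.ofReal (1 / 2) ∧
      ν (V ∩ W) = ENNReal.ofReal 0.39 ∧
      ν (U ∩ W) = ENNReal.ofReal 0.11 ∧
      ν (Uᶜ ∩ V) = ENNReal.ofReal 0.11 := by
  rintro ⟨X, mX, ν, hP, U, V, W, hU, hV, hW, hνW, hνV, hVW, hUW, hUcV⟩
  have hsub : V ∩ W ⊆ (U ∩ W) ∪ (Uᶜ ∩ V) := by
    intro x ⟨hxV, hxW⟩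
    by_cases hx : x ∈ U
    · exact Or.inl ⟨hx, hxW⟩
    · exact Or.inr ⟨hx, hxV⟩
  have hle : ν (V ∩ W) ≤ ν (U ∩ W) + ν (Uᶜ ∩ V) :=
    le_trans (measure_mono hsub) (measure_union_le _ _)
  rw [hVW, hUW, hUcV, ← ENNReal.ofReal_add (by norm_num) (by norm_num)] at hle
  rw [ENNReal.ofReal_le_ofReal_iff (by norm_num)] at hle
  norm_num at hle
end

section
/- There do not exist three orthonormal bases {φ₁,φ₂}, {ψ₁,ψ₂}, {χ₁,χ₂} of the complex Hilbert space ℂ² such that |⟨φ₁,ψ₁⟩|² = |⟨ψ₁,χ₁⟩|² = |⟨χ₁,φ₂⟩|² = |⟨φ₂,ψ₂⟩|² = |⟨ψ₂,χ₂⟩|² = |⟨χ₂,φ₁⟩|² = 0.78 and the six complementary squared overlaps all equal 0.22. -/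
open scoped ComplexInnerProductSpace

theorem stmt_14 :
    ¬ ∃ (φ ψ χ : OrthonormalBasis (Fin 2) ℂ (EuclideanSpace ℂ (Fin 2))),
      ‖⟪φ 0, ψ 0⟫‖ ^ 2 = 0.78 ∧ ‖⟪ψ 0, χ 0⟫‖ ^ 2 = 0.78 ∧ ‖⟪χ 0, φ 1⟫‖ ^ 2 = 0.78 ∧
      ‖⟪φ 1, ψ 1⟫‖ ^ 2 = 0.78 ∧ ‖⟪ψ 1, χ 1⟫‖ ^ 2 = 0.78 ∧ ‖⟪χ 1, φ 0⟫‖ ^ 2 = 0.78 ∧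
      ‖⟪φ 0, ψ 1⟫‖ ^ 2 = 0.22 ∧ ‖⟪ψ 0, χ 1⟫‖ ^ 2 = 0.22 ∧ ‖⟪χ 0, φ 0⟫‖ ^ 2 = 0.22 ∧
      ‖⟪φ 1, ψ 0⟫‖ ^ 2 = 0.22 ∧ ‖⟪ψ 1, χ 0⟫‖ ^ 2 = 0.22 ∧ ‖⟪χ 1, φ 1⟫‖ ^ 2 = 0.22
    := by
  rintro ⟨φ, ψ, χ, h1, h2, h3, h4, h5, h6, h7, h8, h9, h10, h11, h12⟩
  have key := ψ.sum_inner_mul_inner (φ 0) (χ 0)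
  rw [Fin.sum_univ_two] at key
  have h9' : ‖⟪φ 0, χ 0⟫‖ ^ 2 = 0.22 := by
    rw [← inner_conj_symm (φ 0) (χ 0), RCLike.norm_conj]
    exact h9
  have htri : ‖⟪φ 0, ψ 0⟫ * ⟪ψ 0, χ 0⟫‖
      ≤ ‖⟪φ 0, ψ 0⟫ * ⟪ψ 0, χ 0⟫ + ⟪φ 0, ψ 1⟫ * ⟪ψ 1, χ 0⟫‖
        + ‖⟪φ 0, ψ 1⟫ * ⟪ψ 1, χ 0⟫‖ :=
    norm_le_add_norm_add _ _
  rw [key, norm_mul, norm_mul] at htri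
  have na := norm_nonneg (⟪φ 0, ψ 0⟫)
  have nb := norm_nonneg (⟪ψ 0, χ 0⟫)
  have nc := norm_nonneg (⟪φ 0, ψ 1⟫)
  have nd := norm_nonneg (⟪ψ 1, χ 0⟫)
  have ne0 := norm_nonneg (⟪φ 0, χ 0⟫)
  have ea : ‖⟪φ 0, ψ 0⟫‖ = Real.sqrt 0.78 := by rw [← h1, Real.sqrt_sq na]
  have eb : ‖⟪ψ 0, χ 0⟫‖ = Real.sqrt 0.78 := by rw [← h2, Real.sqrt_sq nb]
  have ec : ‖⟪φ 0, ψ 1⟫‖ = Real.sqrt 0.22 := by rw [← h7, Real.sqrt_sq nc]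
  have ed : ‖⟪ψ 1, χ 0⟫‖ = Real.sqrt 0.22 := by rw [← h11, Real.sqrt_sq nd]
  rw [ea, eb, ec, ed, Real.mul_self_sqrt (by norm_num : (0:ℝ) ≤ 0.78),
    Real.mul_self_sqrt (by norm_num : (0:ℝ) ≤ 0.22)] at htri
  nlinarith [h9', ne0, htri]
end
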